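/- Edmonds' greedy optimality theorem: let f : 2^{[n]} → ℝ be monotone, submodular, with f(∅) = 0, and let weights b_1 ≥ b_2 ≥ … ≥ b_n ≥ 0 be sorted in nonincreasing order. Define x by x_i = f({1,…,i}) − f({1,…,i−1}). Then x maximizes the linear objective Σ_i b_i y_i over all y in the polymatroid P(f) = {y ≥ 0 : Σ_{i∈S} y_i ≤ f(S) for all S ⊆ [n]}. -/
import Mathlib

open Finset

private lemma abel_sum (c Z : ℕ → ℝ) (N : ℕ) :
    ∑ k ∈ Finset.range N, c k * (Z (k+1) - Z k)
      = ∑ k ∈ Finset.range N, (c k - c (k+1)) * Z (k+1) + c N * Z N - c 0 * Z 0 := by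
  induction N with
  | zero => simp
  | succ N ih => rw [Finset.sum_range_succ, Finset.sum_range_succ, ih]; ring

/-- Edmonds' greedy optimality: the greedy vector maximizes `∑ b i * y i`
over the polymatroid when the weights are sorted nonincreasingly. -/
theorem stmt_5 (n : ℕ) (f : Finset (Fin n) → ℝ)
    (hmono : ∀ A B : Finset (Fin n), A ⊆ B → f A ≤ f B)
    (hsub : ∀ A B : Finset (Fin n), f (A ∪ B) + f (A ∩ B) ≤ f A + f B)
    (hempty : f ∅ = 0)
    (b : Fin n → ℝ)
    (hb0 : ∀ i, 0 ≤ b i)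
    (hbsort : ∀ i j : Fin n, i ≤ j → b j ≤ b i)
    (x : Fin n → ℝ)
    (hx : ∀ i : Fin n,
      x i = f (Finset.univ.filter (fun j => j ≤ i)) -
            f (Finset.univ.filter (fun j => j < i))) :
    ∀ y : Fin n → ℝ, (∀ i, 0 ≤ y i) →
      (∀ S : Finset (Fin n), ∑ i ∈ S, y i ≤ f S) →
      ∑ i, b i * y i ≤ ∑ i, b i * x i := by
  intro y hy0 hyf
  set T : ℕ → Finset (Fin n) := fun m => univ.filter (fun j => (j : ℕ) < m) with hT
  have hT0 : T 0 = ∅ := by simp [hT]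
  have hTins : ∀ (k : ℕ) (hk : k < n), T (k+1) = insert ⟨k, hk⟩ (T k) := by
    intro k hk
    ext j
    simp only [hT, mem_filter, mem_univ, true_and, mem_insert, Nat.lt_succ_iff_lt_or_eq,
      Fin.ext_iff]
    tauto
  have hmem : ∀ (k : ℕ) (hk : k < n), (⟨k, hk⟩ : Fin n) ∉ T k := by
    intro k hk; simp [hT]
  have hx' : ∀ (k : ℕ) (hk : k < n), x ⟨k, hk⟩ = f (T (k+1)) - f (T k) := by
    intro k hk
    have e1 : univ.filter (fun j => j ≤ (⟨k, hk⟩ : Fin n)) = T (k+1) := by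
      ext j; simp [hT, Fin.le_def, Nat.lt_succ_iff]
    have e2 : univ.filter (fun j => j < (⟨k, hk⟩ : Fin n)) = T k := by
      ext j; simp [hT, Fin.lt_def]
    rw [hx, e1, e2]
  have hxsum : ∀ m, m ≤ n → ∑ j ∈ T m, x j = f (T m) := by
    intro m
    induction m with
    | zero => intro _; simp [hT0, hempty]
    | succ m ih =>
      intro hm
      have hmn : m < n := hm
      rw [hTins m hmn, sum_insert (hmem m hmn), ih (le_of_lt hmn), hx' m hmn,
        ← hTins m hmn]
      ring
  set c : ℕ → ℝ := fun k => if h : k < n then b ⟨k, h⟩ else 0 with hc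
  have hcn : ∀ k, n ≤ k → c k = 0 := fun k hk => dif_neg (not_lt.2 hk)
  have hcmono : ∀ k, c (k+1) ≤ c k := by
    intro k
    by_cases h1 : k + 1 < n
    · have h0 : k < n := Nat.lt_of_succ_lt h1
      simp only [hc, dif_pos h1, dif_pos h0]
      exact hbsort _ _ (by simp [Fin.le_def])
    · rw [hcn (k+1) (not_lt.1 h1)]
      by_cases h0 : k < n
      · simp only [hc, dif_pos h0]; exact hb0 _
      · rw [hcn k (not_lt.1 h0)]
  have key : ∀ z : Fin n → ℝ,
      ∑ i, b i * z i = ∑ k ∈ range n, (c k - c (k+1)) * (∑ j ∈ T (k+1), z j) := by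
    intro z
    have h1 : ∑ i, b i * z i
        = ∑ k ∈ range n, c k * ((∑ j ∈ T (k+1), z j) - (∑ j ∈ T k, z j)) := by
      rw [← Fin.sum_univ_eq_sum_range
        (fun k => c k * ((∑ j ∈ T (k+1), z j) - (∑ j ∈ T k, z j))) n]
      apply Finset.sum_congr rfl
      intro i _
      have hd : (∑ j ∈ T ((i : ℕ)+1), z j) - (∑ j ∈ T (i : ℕ), z j) = z i := by
        rw [hTins i i.isLt, sum_insert (hmem i i.isLt)]
        simp
      rw [hd]
      simp [hc, i.isLt]
    rw [h1, abel_sum c (fun m => ∑ j ∈ T m, z j), hcn n le_rfl, hT0]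
    simp
  rw [key y, key x]
  apply Finset.sum_le_sum
  intro k hk
  have hk' : k + 1 ≤ n := mem_range.1 hk
  rw [hxsum (k+1) hk']
  exact mul_le_mul_of_nonneg_left (hyf (T (k+1))) (sub_nonneg.2 (hcmono k))
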